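/- Let F ∈ ℤ[[t]] be the formal power series F(t) = (∏_{n=1}^{∞}(1 − tⁿ)³ + 3t·∏_{n=1}^{∞}(1 − t^{9n})³) · (∏_{n=1}^{∞}(1 − t^{3n})⁹)^{-1}. Then the coefficient of t^k in F is zero for every k not divisible by 3. (This is the formal-series form of the statement that f₂(τ) = η(τ/3)³η(τ)^{−9} + 3η(3τ)³η(τ)^{−9} has a q-expansion q^{−1/3}(1 + 14q + 92q² + …) in integer powers of q.) -/

import Mathlib

open PowerSeries Finset

/-!
Since `∏(1 - t^{3n})⁹` is a power series in `t³`, so is its inverse, and it suffices that the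
numerator `∏(1 - tⁿ)³ + 3t ∏(1 - t^{9n})³` is one. By Jacobi's identity
`∏(1 - tⁿ)³ = ∑ᵢ (-1)ⁱ (2i + 1) t^{i(i+1)/2}`, and `i(i+1)/2` is divisible by `3` unless
`i = 3s + 1`; then `i(i+1)/2 = 9 · s(s+1)/2 + 1` and `(-1)ⁱ (2i + 1) = -3 · (-1)ˢ (2s + 1)`, so
these terms add up to exactly `-3t ∏(1 - t^{9n})³`.

Jacobi's identity comes from its finite form
`∏_{n ≤ N} (1 - qⁿ)² = ∑_{i ≤ N} (-1)ⁱ (2i + 1) q^{i(i+1)/2} [2N+1 choose N-i]_q`: expand the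
finite triple product `(1 + z) ∏_{n ≤ N} (qⁿ + z)(1 + z qⁿ)` by the `q`-binomial theorem and
differentiate at `z = -1`, where the terms of `z^{N+1+i}` and `z^{N-i}` carry the same power of
`q`. Multiplied by `∏_{n ≤ N} (1 - qⁿ)`, each `[2N+1 choose N-i]_q` becomes `≡ 1 mod q^{N-i+1}`,
which gives Jacobi's identity modulo `q^{N+1}`.
-/

/-- The infinite product `∏_{n=1}^∞ (1 − t^{an})^e` as a formal power series in `ℤ[[t]]`
(with `a ≥ 1`): since the factor `1 − t^{a(n+1)}` is `≡ 1 mod t^{k+1}` once `n > k`, the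
`k`-th coefficient of the partial products stabilizes, and we take the stabilized value
`coeff k (∏_{n=0}^{k} (1 − t^{a(n+1)})^e)`. -/
noncomputable def eulerProd (a e : ℕ) : ℤ⟦X⟧ :=
  PowerSeries.mk fun k =>
    PowerSeries.coeff k (∏ n ∈ Finset.range (k + 1), (1 - (PowerSeries.X : ℤ⟦X⟧) ^ (a * (n + 1))) ^ e)

/-- `F(t) = (∏_{n=1}^∞(1 − tⁿ)³ + 3t·∏_{n=1}^∞(1 − t^{9n})³) · (∏_{n=1}^∞(1 − t^{3n})⁹)⁻¹`,
where the inverse exists since `∏_{n=1}^∞(1 − t^{3n})⁹` has constant term `1`. -/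
noncomputable def F : ℤ⟦X⟧ :=
  (eulerProd 1 3 + 3 * PowerSeries.X * eulerProd 9 3) * PowerSeries.invOfUnit (eulerProd 3 9) 1

namespace Nat

theorem le_choose_two_succ (i : ℕ) : i ≤ (i + 1).choose 2 := by
  simp [choose_succ_succ']

theorem strictMono_choose_two_succ : StrictMono fun i : ℕ => (i + 1).choose 2 :=
  strictMono_nat_of_lt_succ fun i => by simp [choose_succ_succ']

theorem choose_two_add_mul_eq (i l : ℕ) :
    (i + l + 1 + i).choose 2 + (i + l) * l =
        (i + l).choose 2 + (i + l) * (i + l + 1) + (i + 1).choose 2 ∧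
      l.choose 2 + (i + l) * (i + l + 1 + i) =
        (i + l).choose 2 + (i + l) * (i + l + 1) + (i + 1).choose 2 := by
  constructor <;> qify [cast_choose_two] <;> ring

theorem choose_two_three_mul_add_one_add_one (s : ℕ) :
    (3 * s + 1 + 1).choose 2 = 9 * (s + 1).choose 2 + 1 := by
  qify [cast_choose_two]
  ring

theorem exists_eq_three_mul_add_one_of_not_three_dvd_choose_two {i : ℕ}
    (h : ¬ 3 ∣ (i + 1).choose 2) : ∃ s, i = 3 * s + 1 := by
  obtain ⟨s, hs | hs | hs⟩ : ∃ s, i = 3 * s ∨ i = 3 * s + 1 ∨ i = 3 * s + 2 := ⟨i / 3, by omega⟩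
  · refine absurd ⟨3 * s.choose 2 + 2 * s, ?_⟩ h
    rw [hs]
    qify [cast_choose_two]
    ring
  · exact ⟨s, hs⟩
  · refine absurd ⟨3 * (s + 1).choose 2 + s + 1, ?_⟩ h
    rw [hs]
    qify [cast_choose_two]
    ring

end Nat

section QBinomial

variable {R S : Type*} [CommRing R] [CommRing S]

/-- `qBinomial q j k` is the Gaussian binomial coefficient `[j + k choose j]_q`. Indexing by the two
parts `j, k` keeps both Pascal rules and the symmetry free of truncated subtraction. -/
def qBinomial (q : R) : ℕ → ℕ → R
  | 0, _ => 1
  | _ + 1, 0 => 1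
  | j + 1, k + 1 => qBinomial q j (k + 1) + q ^ (j + 1) * qBinomial q (j + 1) k

variable (q : R)

@[simp] theorem qBinomial_zero_left (k : ℕ) : qBinomial q 0 k = 1 := by
  rw [qBinomial]

theorem qBinomial_succ_succ (j k : ℕ) :
    qBinomial q (j + 1) (k + 1) = qBinomial q j (k + 1) + q ^ (j + 1) * qBinomial q (j + 1) k := by
  rw [qBinomial]

@[simp] theorem qBinomial_zero_right (j : ℕ) : qBinomial q j 0 = 1 := by
  cases j <;> rw [qBinomial]

theorem qBinomial_one_succ (k : ℕ) : qBinomial q 1 (k + 1) = qBinomial q 1 k + q ^ (k + 1) := by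
  induction k with
  | zero => simp [qBinomial_succ_succ, add_comm]
  | succ k ih =>
    have h₁ := qBinomial_succ_succ q 0 (k + 1)
    have h₂ := qBinomial_succ_succ q 0 k
    simp only [qBinomial_zero_left, zero_add, pow_one] at h₁ h₂
    linear_combination h₁ + q * ih - h₂

theorem qBinomial_succ_one (j : ℕ) : qBinomial q (j + 1) 1 = 1 + q * qBinomial q j 1 := by
  induction j with
  | zero => simp [qBinomial_succ_succ]
  | succ j ih =>
    have h₁ := qBinomial_succ_succ q (j + 1) 0
    have h₂ := qBinomial_succ_succ q j 0
    simp only [qBinomial_zero_right, mul_one] at h₁ h₂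
    linear_combination h₁ - q * h₂ + ih

theorem qBinomial_succ_succ' : ∀ j k : ℕ,
    qBinomial q (j + 1) (k + 1) = qBinomial q (j + 1) k + q ^ (k + 1) * qBinomial q j (k + 1)
  | 0, k => by rw [qBinomial_one_succ]; simp
  | j + 1, 0 => by rw [qBinomial_succ_one]; simp
  | j + 1, k + 1 => by
    linear_combination qBinomial_succ_succ q (j + 1) (k + 1) + qBinomial_succ_succ' j (k + 1)
      - q ^ (k + 2) * qBinomial_succ_succ q j (k + 1) + q ^ (j + 2) * qBinomial_succ_succ' (j + 1) k
      - qBinomial_succ_succ q (j + 1) k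

theorem qBinomial_comm : ∀ j k : ℕ, qBinomial q j k = qBinomial q k j
  | 0, k => by simp
  | j + 1, 0 => by simp
  | j + 1, k + 1 => by
    rw [qBinomial_succ_succ, qBinomial_comm j (k + 1), qBinomial_comm (j + 1) k,
      qBinomial_succ_succ']

theorem map_qBinomial (f : R →+* S) : ∀ j k : ℕ, f (qBinomial q j k) = qBinomial (f q) j k
  | 0, k => by simp
  | j + 1, 0 => by simp
  | j + 1, k + 1 => by
    simp only [qBinomial_succ_succ, map_add, map_mul, map_pow, map_qBinomial f j (k + 1),
      map_qBinomial f (j + 1) k]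

theorem qBinomial_mul_prod_one_sub_pow : ∀ j k : ℕ,
    qBinomial q j k * ∏ i ∈ range k, (1 - q ^ (i + 1)) = ∏ i ∈ range k, (1 - q ^ (j + 1 + i))
  | j, 0 => by simp
  | 0, k + 1 => by simp [add_comm]
  | j + 1, k + 1 => by
    have h := qBinomial_mul_prod_one_sub_pow j (k + 1)
    rw [prod_range_succ' (fun i => 1 - q ^ (j + 1 + i))] at h
    rw [qBinomial_succ_succ', add_mul, mul_assoc, h, prod_range_succ (fun i => 1 - q ^ (i + 1)),
      ← mul_assoc, qBinomial_mul_prod_one_sub_pow (j + 1) k, prod_range_succ]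
    have hshift : ∏ i ∈ range k, (1 - q ^ (j + 1 + (i + 1))) =
        ∏ i ∈ range k, (1 - q ^ (j + 1 + 1 + i)) :=
      prod_congr rfl fun i _ => by ring_nf
    rw [hshift]
    ring

theorem prod_add_mul_pow_eq_sum_antidiagonal (u : R) : ∀ (M : ℕ) (v : R),
    ∏ m ∈ range M, (u + v * q ^ m) =
      ∑ p ∈ antidiagonal M, qBinomial q p.1 p.2 * q ^ p.1.choose 2 * v ^ p.1 * u ^ p.2
  | 0, v => by simp
  | 1, v => by simp [Nat.sum_antidiagonal_succ]
  | M + 2, v => by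
    have hshift : ∏ m ∈ range (M + 1), (u + v * q ^ (m + 1)) =
        ∏ m ∈ range (M + 1), (u + v * q * q ^ m) :=
      prod_congr rfl fun m _ => by ring
    rw [prod_range_succ', pow_zero, mul_one, hshift,
      prod_add_mul_pow_eq_sum_antidiagonal u (M + 1) (v * q), mul_add]
    conv_lhs => enter [1]; rw [Nat.sum_antidiagonal_succ]
    conv_lhs => enter [2]; rw [Nat.sum_antidiagonal_succ']
    rw [Nat.sum_antidiagonal_succ, Nat.sum_antidiagonal_succ']
    have hpascal : ∀ p ∈ antidiagonal M,
        qBinomial q (p.1 + 1) (p.2 + 1) * q ^ (p.1 + 1).choose 2 * v ^ (p.1 + 1) * u ^ (p.2 + 1) =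
          qBinomial q (p.1 + 1) p.2 * q ^ (p.1 + 1).choose 2 * (v * q) ^ (p.1 + 1) * u ^ p.2 * u +
          qBinomial q p.1 (p.2 + 1) * q ^ p.1.choose 2 * (v * q) ^ p.1 * u ^ (p.2 + 1) * v := by
      intro p _
      rw [qBinomial_succ_succ, Nat.choose_succ_succ', Nat.choose_one_right]
      ring
    rw [sum_congr rfl hpascal, sum_add_distrib, add_mul, add_mul, sum_mul, sum_mul,
      Nat.choose_succ_succ' (M + 1), Nat.choose_one_right]
    simp only [qBinomial_zero_left, qBinomial_zero_right, Nat.choose_zero_succ]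
    ring

end QBinomial

section FiniteJacobi

theorem Finset.Nat.sum_antidiagonal_two_mul_add_one {M : Type*} [AddCommMonoid M] (N : ℕ)
    (f : ℕ × ℕ → M) :
    ∑ p ∈ antidiagonal (2 * N + 1), f p =
      ∑ i ∈ range (N + 1), (f (N + 1 + i, N - i) + f (N - i, N + 1 + i)) := by
  rw [Nat.sum_antidiagonal_eq_sum_range_succ_mk, show (2 * N + 1).succ = (N + 1) + (N + 1) by omega,
    sum_range_add, ← sum_range_reflect, add_comm, ← sum_add_distrib]
  refine sum_congr rfl fun i hi => ?_
  have hiN : i ≤ N := Nat.lt_succ_iff.mp (mem_range.mp hi)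
  rw [show 2 * N + 1 - (N + 1 + i) = N - i by omega, show N + 1 - 1 - i = N - i by omega,
    show 2 * N + 1 - (N - i) = N + 1 + i by omega]

variable {R : Type*} [CommRing R]

theorem prod_range_two_mul_add_one_pow_add_mul_pow (q z : R) (N : ℕ) :
    ∏ m ∈ range (2 * N + 1), (q ^ N + z * q ^ m) =
      q ^ (N.choose 2 + N * (N + 1)) *
        ((1 + z) * ∏ n ∈ range N, ((q ^ (n + 1) + z) * (1 + z * q ^ (n + 1)))) := by
  have hlow : ∏ m ∈ range N, (q ^ N + z * q ^ m) =
      q ^ N.choose 2 * ∏ n ∈ range N, (q ^ (n + 1) + z) := by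
    have hrefl : ∏ m ∈ range N, (q ^ (N - m) + z) = ∏ n ∈ range N, (q ^ (n + 1) + z) := by
      rw [← prod_range_reflect (fun n => q ^ (n + 1) + z)]
      exact prod_congr rfl fun m hm => by
        have := mem_range.mp hm
        congr 2
        omega
    calc ∏ m ∈ range N, (q ^ N + z * q ^ m) = ∏ m ∈ range N, (q ^ m * (q ^ (N - m) + z)) :=
          prod_congr rfl fun m hm => by
            rw [mul_add, ← pow_add, Nat.add_sub_cancel' (mem_range.mp hm).le, mul_comm z]
      _ = q ^ N.choose 2 * ∏ n ∈ range N, (q ^ (n + 1) + z) := by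
        rw [prod_mul_distrib, prod_pow_eq_pow_sum, sum_range_id, ← Nat.choose_two_right, hrefl]
  have hhigh : ∏ n ∈ range N, (q ^ N + z * q ^ (N + (n + 1))) =
      q ^ (N * N) * ∏ n ∈ range N, (1 + z * q ^ (n + 1)) := by
    calc ∏ n ∈ range N, (q ^ N + z * q ^ (N + (n + 1)))
        = ∏ n ∈ range N, (q ^ N * (1 + z * q ^ (n + 1))) := prod_congr rfl fun n _ => by ring
      _ = q ^ (N * N) * ∏ n ∈ range N, (1 + z * q ^ (n + 1)) := by
        rw [prod_mul_distrib, prod_const, card_range, pow_mul]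
  rw [show 2 * N + 1 = N + (N + 1) by ring, prod_range_add, prod_range_succ', hlow, hhigh,
    prod_mul_distrib]
  ring

namespace Polynomial

theorem C_pow_mul_tripleProduct_eq_sum (q : R) (N : ℕ) :
    C (q ^ (N.choose 2 + N * (N + 1))) *
        ((1 + X) * ∏ n ∈ range N, (C (q ^ (n + 1)) + X) * (1 + X * C (q ^ (n + 1)))) =
      ∑ p ∈ antidiagonal (2 * N + 1),
        C (qBinomial q p.1 p.2 * q ^ (p.1.choose 2 + N * p.2)) * X ^ p.1 := by
  have h := (prod_range_two_mul_add_one_pow_add_mul_pow (C q) X N).symm.trans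
    (prod_add_mul_pow_eq_sum_antidiagonal (C q) (C q ^ N) (2 * N + 1) X)
  simp only [← map_pow, ← map_qBinomial] at h
  rw [h]
  refine sum_congr rfl fun p _ => ?_
  rw [pow_add, pow_mul, map_mul, map_mul, map_pow (C) (q ^ N)]
  ring

theorem eval_neg_one_derivative_tripleProduct (q : R) (N : ℕ) :
    (derivative ((1 + X) * ∏ n ∈ range N, (C (q ^ (n + 1)) + X) * (1 + X * C (q ^ (n + 1))))).eval
      (-1) = (-1) ^ N * ∏ n ∈ range N, (1 - q ^ (n + 1)) ^ 2 := by
  have hfactor : ∀ n ∈ range N,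
      ((C (q ^ (n + 1)) + X) * (1 + X * C (q ^ (n + 1)))).eval (-1) = -(1 - q ^ (n + 1)) ^ 2 :=
    fun n _ => by
      simp only [map_pow, eval_mul, eval_add, eval_pow, eval_C, eval_X, eval_one, neg_mul, one_mul]
      ring
  rw [derivative_mul, eval_add, eval_mul, eval_mul, eval_prod, prod_congr rfl hfactor, prod_neg,
    card_range]
  simp

end Polynomial

theorem prod_one_sub_pow_sq_eq_sum [NoZeroDivisors R] {q : R} (hq : q ≠ 0) (N : ℕ) :
    ∏ n ∈ range N, (1 - q ^ (n + 1)) ^ 2 =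
      ∑ i ∈ range (N + 1),
        (-1) ^ i * (2 * i + 1) * q ^ (i + 1).choose 2 * qBinomial q (N + 1 + i) (N - i) := by
  have h := congrArg (fun p => (Polynomial.derivative p).eval (-1))
    (Polynomial.C_pow_mul_tripleProduct_eq_sum q N)
  simp only [Polynomial.derivative_C_mul, Polynomial.eval_mul, Polynomial.eval_C,
    Polynomial.eval_neg_one_derivative_tripleProduct, Polynomial.derivative_sum,
    Polynomial.eval_finsetSum, Polynomial.derivative_X_pow, Polynomial.eval_pow,
    Polynomial.eval_X] at h
  rw [Nat.sum_antidiagonal_two_mul_add_one] at h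
  have hpair : ∀ i ∈ range (N + 1),
      qBinomial q (N + 1 + i) (N - i) * q ^ ((N + 1 + i).choose 2 + N * (N - i)) *
          ((N + 1 + i : ℕ) * (-1) ^ (N + 1 + i - 1)) +
        qBinomial q (N - i) (N + 1 + i) * q ^ ((N - i).choose 2 + N * (N + 1 + i)) *
          ((N - i : ℕ) * (-1) ^ (N - i - 1)) =
      q ^ (N.choose 2 + N * (N + 1)) * ((-1) ^ N *
        ((-1) ^ i * (2 * i + 1) * q ^ (i + 1).choose 2 * qBinomial q (N + 1 + i) (N - i))) := by
    intro i hi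
    obtain ⟨l, rfl⟩ : ∃ l, N = i + l := ⟨N - i, by have := mem_range.mp hi; omega⟩
    obtain ⟨e₁, e₂⟩ := Nat.choose_two_add_mul_eq i l
    have hsign : (-1 : R) ^ (i + l + i) = (-1) ^ l := by
      rw [show i + l + i = l + 2 * i by ring, pow_add, pow_mul, neg_one_sq, one_pow, mul_one]
    have hsign_mul : (-1 : R) ^ (i + l) * (-1) ^ i = (-1) ^ l := by rw [← pow_add, hsign]
    have hsign_pred : (l : R) * (-1) ^ (l - 1) = -(l * (-1) ^ l) := by
      rcases l with _ | l <;> simp [pow_succ]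
    rw [Nat.add_sub_cancel_left, show i + l + 1 + i - 1 = i + l + i by omega, hsign, hsign_pred,
      e₁, e₂, qBinomial_comm q l, pow_add]
    push_cast
    linear_combination
      -(q ^ ((i + l).choose 2 + (i + l) * (i + l + 1)) * q ^ (i + 1).choose 2 * (2 * i + 1) *
        qBinomial q (i + l + 1 + i) l) * hsign_mul
  rw [sum_congr rfl hpair, ← mul_sum, ← mul_sum] at h
  exact (isUnit_one.neg.pow N).mul_left_cancel (mul_left_cancel₀ (pow_ne_zero _ hq) h)

theorem dvd_mul_sub_one {a x y : R} (hx : a ∣ x - 1) (hy : a ∣ y - 1) : a ∣ x * y - 1 := by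
  rw [show x * y - 1 = x * (y - 1) + (x - 1) by ring]
  exact dvd_add (dvd_mul_of_dvd_right hy x) hx

theorem pow_dvd_prod_one_sub_pow_sub_one {ι : Type*} (q : R) (s : Finset ι) (e : ι → ℕ) {c : ℕ}
    (h : ∀ i ∈ s, c ≤ e i) : q ^ c ∣ ∏ i ∈ s, (1 - q ^ e i) - 1 :=
  prod_induction _ (fun x => q ^ c ∣ x - 1) (fun _ _ => dvd_mul_sub_one) (by simp)
    fun i hi => by simpa using (pow_dvd_pow q (h i hi)).neg_right

theorem pow_dvd_qBinomial_mul_prod_sub_one (q : R) {N i : ℕ} (hi : i ≤ N) :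
    q ^ (N - i + 1) ∣ qBinomial q (N + 1 + i) (N - i) * ∏ n ∈ range N, (1 - q ^ (n + 1)) - 1 := by
  obtain ⟨l, rfl⟩ : ∃ l, N = l + i := ⟨N - i, by omega⟩
  rw [Nat.add_sub_cancel, prod_range_add, ← mul_assoc, qBinomial_mul_prod_one_sub_pow]
  exact dvd_mul_sub_one (pow_dvd_prod_one_sub_pow_sub_one q _ _ fun n _ => by omega)
    (pow_dvd_prod_one_sub_pow_sub_one q _ _ fun n _ => by omega)

theorem pow_dvd_prod_one_sub_pow_pow_three_sub_sum [NoZeroDivisors R] {q : R} (hq : q ≠ 0)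
    (N : ℕ) : q ^ (N + 1) ∣ ∏ n ∈ range N, (1 - q ^ (n + 1)) ^ 3 -
      ∑ i ∈ range (N + 1), (-1) ^ i * (2 * i + 1) * q ^ (i + 1).choose 2 := by
  have hcube : ∏ n ∈ range N, (1 - q ^ (n + 1)) ^ 3 =
      (∏ n ∈ range N, (1 - q ^ (n + 1)) ^ 2) * ∏ n ∈ range N, (1 - q ^ (n + 1)) := by
    rw [← prod_mul_distrib]
    exact prod_congr rfl fun _ _ => pow_succ _ 2
  rw [hcube, prod_one_sub_pow_sq_eq_sum hq, sum_mul, ← sum_sub_distrib]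
  refine dvd_sum fun i hi => ?_
  have hiN : i ≤ N := Nat.lt_succ_iff.mp (mem_range.mp hi)
  have hiT := Nat.le_choose_two_succ i
  calc q ^ (N + 1) ∣ q ^ ((i + 1).choose 2 + (N - i + 1)) := pow_dvd_pow q (by omega)
    _ ∣ (-1) ^ i * (2 * i + 1) * q ^ (i + 1).choose 2 *
        (qBinomial q (N + 1 + i) (N - i) * ∏ n ∈ range N, (1 - q ^ (n + 1)) - 1) := by
      rw [pow_add]
      exact mul_dvd_mul (dvd_mul_left _ _) (pow_dvd_qBinomial_mul_prod_sub_one q hiN)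
    _ = _ := by ring

end FiniteJacobi

namespace PowerSeries

variable {R : Type*} [CommRing R] {d : ℕ} (hd : d ≠ 0)

theorem mem_range_expand_iff {f : R⟦X⟧} :
    f ∈ (expand d hd).range ↔ ∀ k, ¬ d ∣ k → coeff k f = 0 := by
  refine (AlgHom.mem_range _).trans ⟨?_, fun h => ⟨mk fun m => coeff (d * m) f, ?_⟩⟩
  · rintro ⟨g, rfl⟩ k hk
    exact coeff_expand_of_not_dvd d hd g hk
  · ext n
    rw [coeff_expand]
    split_ifs with hn
    · obtain ⟨m, rfl⟩ := hn
      rw [coeff_mk, Nat.mul_div_cancel_left m (Nat.pos_of_ne_zero hd)]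
    · exact (h n hn).symm

theorem invOfUnit_mem_range_expand {φ : R⟦X⟧} (hφ : φ ∈ (expand d hd).range) (u : Rˣ)
    (h : constantCoeff φ = u) : invOfUnit φ u ∈ (expand d hd).range := by
  obtain ⟨ψ, rfl⟩ := (AlgHom.mem_range _).mp hφ
  have hψ : constantCoeff ψ = u := by rwa [constantCoeff_expand] at h
  refine (AlgHom.mem_range _).mpr
    ⟨invOfUnit ψ u, left_inv_eq_right_inv (a := expand d hd ψ) ?_ (mul_invOfUnit _ u h)⟩
  rw [← map_mul, mul_comm, mul_invOfUnit ψ u hψ, map_one]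

end PowerSeries

section EulerProducts

theorem X_pow_dvd_prod_range_sub_prod_range {R : Type*} [CommRing R] {a : ℕ} (ha : 0 < a) (e : ℕ)
    {M M' : ℕ} (h : M ≤ M') :
    (X : R⟦X⟧) ^ M ∣ ∏ n ∈ range M', (1 - X ^ (a * (n + 1))) ^ e -
      ∏ n ∈ range M, (1 - X ^ (a * (n + 1))) ^ e := by
  obtain ⟨d, rfl⟩ := Nat.exists_eq_add_of_le h
  rw [prod_range_add, ← mul_sub_one, prod_pow (range d)]
  refine dvd_mul_of_dvd_right ((pow_dvd_prod_one_sub_pow_sub_one X _ _ fun n _ => ?_).trans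
    (sub_one_dvd_pow_sub_one _ e)) _
  nlinarith

theorem coeff_eulerProd_of_lt {a : ℕ} (ha : 0 < a) (e : ℕ) {k M : ℕ} (hk : k < M) :
    coeff k (eulerProd a e) = coeff k (∏ n ∈ range M, (1 - X ^ (a * (n + 1))) ^ e) := by
  have hstable : ∀ M₁ M₂, k < M₁ → M₁ ≤ M₂ →
      coeff k (∏ n ∈ range M₂, (1 - (X : ℤ⟦X⟧) ^ (a * (n + 1))) ^ e) =
        coeff k (∏ n ∈ range M₁, (1 - X ^ (a * (n + 1))) ^ e) := fun M₁ M₂ hk₁ h₁₂ => by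
    rw [← sub_eq_zero, ← map_sub]
    exact X_pow_dvd_iff.mp (X_pow_dvd_prod_range_sub_prod_range ha e h₁₂) k hk₁
  rw [eulerProd, coeff_mk]
  rcases le_total M (k + 1) with h | h
  · exact hstable M (k + 1) hk h
  · exact (hstable (k + 1) M k.lt_succ_self h).symm

theorem constantCoeff_eulerProd {a : ℕ} (ha : 0 < a) (e : ℕ) :
    constantCoeff (eulerProd a e) = 1 := by
  rw [← coeff_zero_eq_constantCoeff_apply, eulerProd, coeff_mk, coeff_zero_eq_constantCoeff_apply]
  simp [ha.ne']

theorem eulerProd_mul_eq_expand {d a : ℕ} (hd : d ≠ 0) (ha : 0 < a) (e : ℕ) :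
    eulerProd (d * a) e = expand d hd (eulerProd a e) := by
  ext k
  have hexpand : ∏ n ∈ range (k + 1), (1 - (X : ℤ⟦X⟧) ^ (d * a * (n + 1))) ^ e =
      expand d hd (∏ n ∈ range (k + 1), (1 - X ^ (a * (n + 1))) ^ e) := by
    simp [pow_mul, mul_assoc]
  rw [eulerProd, coeff_mk, hexpand, coeff_expand, coeff_expand]
  split_ifs
  · exact (coeff_eulerProd_of_lt ha e (Nat.lt_succ_of_le (Nat.div_le_self k d))).symm
  · rfl

theorem coeff_eulerProd_one_three (k : ℕ) :
    coeff k (eulerProd 1 3) =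
      ∑ i ∈ range (k + 1), if k = (i + 1).choose 2 then (-1) ^ i * (2 * i + 1 : ℤ) else 0 := by
  have hjacobi := X_pow_dvd_iff.mp
    (pow_dvd_prod_one_sub_pow_pow_three_sub_sum (X_ne_zero (R := ℤ)) (k + 1)) k (by omega)
  rw [map_sub, sub_eq_zero] at hjacobi
  rw [coeff_eulerProd_of_lt one_pos 3 (Nat.lt_add_one k)]
  simp only [one_mul]
  have hmonomial : ∀ i : ℕ, coeff k ((-1) ^ i * (2 * (i : ℤ⟦X⟧) + 1) * X ^ (i + 1).choose 2) =
      if k = (i + 1).choose 2 then (-1) ^ i * (2 * i + 1 : ℤ) else 0 := fun i => by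
    rw [show (-1) ^ i * (2 * (i : ℤ⟦X⟧) + 1) = C ((-1) ^ i * (2 * i + 1) : ℤ) by simp,
      coeff_C_mul_X_pow]
  rw [hjacobi, map_sum, sum_range_succ, hmonomial,
    if_neg (by have := Nat.le_choose_two_succ (k + 1); omega), add_zero]
  exact sum_congr rfl fun i _ => hmonomial i

theorem coeff_choose_two_eulerProd_one_three (i : ℕ) :
    coeff ((i + 1).choose 2) (eulerProd 1 3) = (-1) ^ i * (2 * i + 1) := by
  rw [coeff_eulerProd_one_three, sum_eq_single_of_mem i
    (mem_range.mpr (Nat.lt_succ_of_le (Nat.le_choose_two_succ i))), if_pos rfl]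
  exact fun j _ hji => if_neg fun h => hji (Nat.strictMono_choose_two_succ.injective h.symm)

theorem coeff_eulerProd_one_three_eq_zero {k : ℕ} (hk : ∀ i, (i + 1).choose 2 ≠ k) :
    coeff k (eulerProd 1 3) = 0 := by
  rw [coeff_eulerProd_one_three]
  exact sum_eq_zero fun i _ => if_neg fun h => hk i h.symm

theorem coeff_eulerProd_one_three_add_eq_zero {k : ℕ} (hk : ¬ 3 ∣ k) :
    coeff k (eulerProd 1 3 + 3 * X * eulerProd 9 3) = 0 := by
  obtain ⟨m, rfl⟩ : ∃ m, k = m + 1 := ⟨k - 1, by omega⟩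
  have h9 : (9 : ℕ) ≠ 0 := by norm_num
  rw [show eulerProd 9 3 = expand 9 h9 (eulerProd 1 3) by
      simpa using eulerProd_mul_eq_expand h9 one_pos 3,
    map_add, mul_assoc, show (3 : ℤ⟦X⟧) = C 3 by simp, coeff_C_mul, coeff_succ_X_mul,
    coeff_expand]
  by_cases htri : ∃ i, (i + 1).choose 2 = m + 1
  · obtain ⟨i, hi⟩ := htri
    obtain ⟨s, rfl⟩ := Nat.exists_eq_three_mul_add_one_of_not_three_dvd_choose_two (hi ▸ hk)
    have hm : m = 9 * (s + 1).choose 2 := by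
      have := Nat.choose_two_three_mul_add_one_add_one s
      omega
    rw [← hi, coeff_choose_two_eulerProd_one_three, hm, if_pos (dvd_mul_right 9 _),
      Nat.mul_div_cancel_left _ (by norm_num), coeff_choose_two_eulerProd_one_three, pow_succ,
      pow_mul]
    push_cast
    ring
  · push Not at htri
    rw [coeff_eulerProd_one_three_eq_zero htri, zero_add]
    split_ifs with h
    · obtain ⟨n, rfl⟩ := h
      rw [Nat.mul_div_cancel_left _ (by norm_num), coeff_eulerProd_one_three_eq_zero, mul_zero]
      intro s hs
      exact htri (3 * s + 1) (by rw [Nat.choose_two_three_mul_add_one_add_one, hs])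
    · rw [mul_zero]

end EulerProducts

/-- The coefficient of `t^k` in `F` vanishes for every `k` not divisible by `3`. -/
theorem coeff_F_eq_zero_of_not_dvd (k : ℕ) (hk : ¬ (3 ∣ k)) :
    PowerSeries.coeff k F = 0 := by
  have h3 : (3 : ℕ) ≠ 0 := three_ne_zero
  have hden : eulerProd 3 9 ∈ (expand 3 h3).range :=
    ⟨eulerProd 1 9, by simpa using (eulerProd_mul_eq_expand h3 one_pos 9).symm⟩
  have hnum : eulerProd 1 3 + 3 * X * eulerProd 9 3 ∈ (expand 3 h3).range :=
    (mem_range_expand_iff h3).2 fun _ => coeff_eulerProd_one_three_add_eq_zero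
  have hinv := invOfUnit_mem_range_expand h3 hden 1 (by simp [constantCoeff_eulerProd])
  exact (mem_range_expand_iff h3).1 (mul_mem hnum hinv) k hk
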